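/- In a descriptive general frame, ◇⁻¹ is a closed operator: for every closed set A (in the topology with the admissible sets as a clopen base), the set ◇⁻¹A = R(A) = {w : ∃v ∈ A, Rvw} is closed; i.e., ◇⁻¹A = ⋂{B ∈ 𝕎 : ◇⁻¹A ⊆ B}. -/

import Mathlib

/-- The diamond set operator: `◇A = {w : ∃v, R w v ∧ v ∈ A}`. -/
def diaOp {W : Type} (R : W → W → Prop) (A : Set W) : Set W := {w | ∃ v, R w v ∧ v ∈ A}

/-- The box set operator: `□A = {w : ∀v, R w v → v ∈ A}`. -/
def boxOp {W : Type} (R : W → W → Prop) (A : Set W) : Set W := {w | ∀ v, R w v → v ∈ A}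

/-- The inverse diamond set operator: `◇⁻¹A = {w : ∃v ∈ A, R v w} = R(A)`. -/
def idiaOp {W : Type} (R : W → W → Prop) (A : Set W) : Set W := {w | ∃ v, R v w ∧ v ∈ A}

/-- The inverse box set operator: `□⁻¹A = {w : ∀v, R v w → v ∈ A}`. -/
def iboxOp {W : Type} (R : W → W → Prop) (A : Set W) : Set W := {w | ∀ v, R v w → v ∈ A}
/-- A general frame: a Kripke frame together with a Boolean algebra of
admissible subsets closed under the diamond operator. -/
structure GenFrame (W : Type) where
  R : W → W → Prop
  adm : Set (Set W)
  univ_mem : Set.univ ∈ adm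
  compl_mem : ∀ X ∈ adm, Xᶜ ∈ adm
  inter_mem : ∀ X ∈ adm, ∀ Y ∈ adm, X ∩ Y ∈ adm
  dia_mem : ∀ X ∈ adm, diaOp R X ∈ adm

/-- The topology generated by the admissible sets as a base of clopen sets. -/
def GenFrame.top {W : Type} (F : GenFrame W) : TopologicalSpace W :=
  TopologicalSpace.generateFrom F.adm

/-- Differentiated: distinct points are separated by admissible sets. -/
def GenFrame.differentiated {W : Type} (F : GenFrame W) : Prop :=
  ∀ x y : W, x ≠ y → ∃ X ∈ F.adm, x ∈ X ∧ y ∉ X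

/-- Tight: `R x y` iff `x ∈ ◇Y` for every admissible `Y` containing `y`. -/
def GenFrame.tight {W : Type} (F : GenFrame W) : Prop :=
  ∀ x y : W, F.R x y ↔ ∀ Y ∈ F.adm, y ∈ Y → x ∈ diaOp F.R Y

/-- Compact: every family of admissible sets with the finite intersection
property has nonempty intersection. -/
def GenFrame.cpt {W : Type} (F : GenFrame W) : Prop :=
  ∀ C : Set (Set W), C ⊆ F.adm →
    (∀ D : Set (Set W), D ⊆ C → D.Finite → (⋂₀ D).Nonempty) →
    (⋂₀ C).Nonempty

/-- A descriptive frame is a differentiated, tight and compact general frame. -/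
def GenFrame.descriptive {W : Type} (F : GenFrame W) : Prop :=
  F.differentiated ∧ F.tight ∧ F.cpt

/-! Tightness makes the graph of `R` closed in `W × W`, and compactness of the
admissible sets is the finite intersection property of a Boolean-algebra base, so by Alexander's
subbasis theorem `W` is compact. Then `◇⁻¹A` is the projection of the closed set
`R ∩ (A × W)` along the compact first factor, hence closed. Finally, since the admissible sets form
a base closed under complements, every closed set is the intersection of its admissible supersets. -/

open TopologicalSpace

theorem isClosed_idiaOp {W : Type} [TopologicalSpace W] [CompactSpace W] {R : W → W → Prop}
    (hR : IsClosed {p : W × W | R p.1 p.2}) {A : Set W} (hA : IsClosed A) :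
    IsClosed (idiaOp R A) := by
  have hproj : idiaOp R A = Prod.snd '' ({p : W × W | R p.1 p.2} ∩ A ×ˢ Set.univ) := by
    ext w
    simp [idiaOp]
  rw [hproj]
  exact isClosedMap_snd_of_compactSpace _ (hR.inter (hA.prod isClosed_univ))

namespace GenFrame

variable {W : Type} (F : GenFrame W)

theorem isClosed_setOf_R [TopologicalSpace W] (hopen : ∀ X ∈ F.adm, IsOpen X) (hF : F.tight) :
    IsClosed {p : W × W | F.R p.1 p.2} := by
  refine isOpen_compl_iff.mp (isOpen_iff_forall_mem_open.mpr ?_)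
  rintro ⟨x, y⟩ hxy
  obtain ⟨Y, hY, hyY, hxY⟩ : ∃ Y ∈ F.adm, y ∈ Y ∧ x ∉ diaOp F.R Y := by
    simpa [hF x y] using hxy
  refine ⟨(diaOp F.R Y)ᶜ ×ˢ Y, ?_, (hopen _ (F.compl_mem _ (F.dia_mem _ hY))).prod (hopen _ hY),
    ⟨hxY, hyY⟩⟩
  rintro ⟨a, b⟩ ⟨ha, hb⟩ hab
  exact ha ⟨b, hab, hb⟩

theorem compactSpace (hF : F.cpt) : @CompactSpace W F.top :=
  @compactSpace_generateFrom_of_compl_mem W F.top F.adm rfl F.compl_mem hF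

theorem isTopologicalBasis : @IsTopologicalBasis W F.top F.adm := by
  simpa [Set.insert_eq_of_mem F.univ_mem] using
    @isTopologicalBasis_of_subbasis_of_inter W F.top F.adm rfl fun X hX Y hY => F.inter_mem X hX Y hY

theorem eq_sInter_of_isClosed {A : Set W} (hA : @IsClosed W F.top A) :
    A = ⋂₀ {X | X ∈ F.adm ∧ A ⊆ X} := by
  let := F.top
  refine (Set.subset_sInter fun X hX => hX.2).antisymm fun w hw => ?_
  by_contra hwA
  obtain ⟨X, hX, hwX, hXA⟩ := F.isTopologicalBasis.exists_subset_of_mem_open hwA hA.isOpen_compl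
  exact hw Xᶜ ⟨F.compl_mem X hX, Set.subset_compl_comm.mp hXA⟩ hwX

end GenFrame

/-- In a descriptive frame, `◇⁻¹` is a closed operator: the image of a closed
set is closed, i.e. it equals the intersection of its admissible supersets. -/
theorem idiaOp_closed {W : Type} (F : GenFrame W) (hF : F.descriptive)
    (A : Set W) (hA : @IsClosed W F.top A) :
    @IsClosed W F.top (idiaOp F.R A) ∧
    idiaOp F.R A = ⋂₀ {B | B ∈ F.adm ∧ idiaOp F.R A ⊆ B} := by
  obtain ⟨-, htight, hcpt⟩ := hF
  let := F.top
  have := F.compactSpace hcpt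
  have hR : IsClosed {p : W × W | F.R p.1 p.2} :=
    F.isClosed_setOf_R (fun _ => isOpen_generateFrom_of_mem) htight
  have hclosed : IsClosed (idiaOp F.R A) := isClosed_idiaOp hR hA
  exact ⟨hclosed, F.eq_sInter_of_isClosed hclosed⟩
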